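/- Let P_t be reversible with respect to π with πᵢ > 0, f : E → [1,∞) with π(f²) < ∞, and suppose the h-transformed semigroup satisfies ‖P_t^f g − π^f(g)‖_{L²(ν)} ≤ e^{−σt}‖g − π^f(g)‖_{L²(ν)} for all g ∈ L²(ν), t ≥ 0, some σ > 0. Then for all i ∈ E and t ≥ 0, ‖P_t(i,·) − π‖_f ≤ π(f²)^{1/2}·(1/πᵢ − 1)^{1/2}·e^{−σt}. -/

import Mathlib

/-!
Testing against the sign function `g = sign (P_t(i,·) - π)` turns the `f`-norm into
`(P_t h)(i) - π(h)` with `h = f g`. As `π` is stationary for `P_t`, `P_t h - π(h)` is centred in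
`L²(π)`, and Cauchy–Schwarz against the `π`-density of `δᵢ - π` bounds its value at `i` by
`(1/πᵢ - 1)^{1/2}` times its `L²(π)` norm. That norm is the `L²(ν)` norm of `P_t^f g - π^f(g)`,
which the hypothesis bounds by `e^{-σt}` times the `L²(π)` standard deviation of `f g`, itself at
most `π(f²)^{1/2}` because `g² = 1`.
-/

theorem Real.tsum_mul_le_sqrt_mul_sqrt {ι : Type*} (a b : ι → ℝ)
    (ha : Summable fun i => a i ^ 2) (hb : Summable fun i => b i ^ 2) :
    ∑' i, a i * b i ≤ √(∑' i, a i ^ 2) * √(∑' i, b i ^ 2) := by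
  have holder := summable_and_inner_le_Lp_mul_Lq_tsum_of_nonneg .two_two
    (f := fun i => |a i|) (g := fun i => |b i|) (fun _ => abs_nonneg _) (fun _ => abs_nonneg _)
    (by simpa only [Real.rpow_two, sq_abs] using ha)
    (by simpa only [Real.rpow_two, sq_abs] using hb)
  simp only [Real.rpow_two, sq_abs, ← Real.sqrt_eq_rpow, ← abs_mul] at holder
  exact (Summable.tsum_le_tsum (fun i => le_abs_self _) holder.1.of_abs holder.1).trans holder.2

theorem Real.tsum_weight_mul_le_sqrt_mul_sqrt {ι : Type*} {w : ι → ℝ} (a b : ι → ℝ)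
    (hw : ∀ i, 0 ≤ w i)
    (ha : Summable fun i => w i * a i ^ 2) (hb : Summable fun i => w i * b i ^ 2) :
    ∑' i, w i * (a i * b i) ≤ √(∑' i, w i * a i ^ 2) * √(∑' i, w i * b i ^ 2) := by
  have hsq : ∀ i (c : ι → ℝ), (√(w i) * c i) ^ 2 = w i * c i ^ 2 := fun i c => by
    rw [mul_pow, Real.sq_sqrt (hw i)]
  have hprod : ∀ i, (√(w i) * a i) * (√(w i) * b i) = w i * (a i * b i) := fun i => by
    rw [mul_mul_mul_comm, Real.mul_self_sqrt (hw i)]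
  simpa only [hsq, hprod] using Real.tsum_mul_le_sqrt_mul_sqrt (fun i => √(w i) * a i)
    (fun i => √(w i) * b i) (by simpa only [hsq] using ha) (by simpa only [hsq] using hb)

section Variance

variable {E : Type*} {π φ : E → ℝ}

theorem hasSum_mul_sub_tsum_sq (hπ : HasSum π 1) (hφ : Summable fun j => π j * φ j)
    (hφ2 : Summable fun j => π j * φ j ^ 2) :
    HasSum (fun j => π j * (φ j - ∑' k, π k * φ k) ^ 2)
      ((∑' j, π j * φ j ^ 2) - (∑' j, π j * φ j) ^ 2) := by
  set m := ∑' k, π k * φ k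
  rw [show (∑' j, π j * φ j ^ 2) - m ^ 2 = (∑' j, π j * φ j ^ 2) - 2 * m * m + m ^ 2 * 1 by ring]
  exact ((hφ2.hasSum.sub (hφ.hasSum.mul_left (2 * m))).add (hπ.mul_left (m ^ 2))).congr_fun
    fun j => by ring

theorem sq_tsum_le_tsum_mul_sq (hπnn : ∀ j, 0 ≤ π j) (hπ : HasSum π 1)
    (hφ : Summable fun j => π j * φ j) (hφ2 : Summable fun j => π j * φ j ^ 2) :
    (∑' j, π j * φ j) ^ 2 ≤ ∑' j, π j * φ j ^ 2 :=
  sub_nonneg.1 <| (hasSum_mul_sub_tsum_sq hπ hφ hφ2).nonneg fun j =>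
    mul_nonneg (hπnn j) (sq_nonneg _)

theorem summable_mul_of_summable_mul_sq (hπnn : ∀ j, 0 ≤ π j) (hπ : Summable π)
    (hφ2 : Summable fun j => π j * φ j ^ 2) : Summable fun j => π j * φ j := by
  refine (hπ.add hφ2).of_norm_bounded fun j => ?_
  have : |φ j| ≤ 1 + φ j ^ 2 := by nlinarith [sq_abs (φ j), abs_nonneg (φ j)]
  rw [Real.norm_eq_abs, abs_mul, abs_of_nonneg (hπnn j)]
  nlinarith [hπnn j]

theorem sub_tsum_le_sqrt_mul_sqrt_variance {i : E} (hπnn : ∀ j, 0 ≤ π j) (hi : 0 < π i)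
    (hπ : HasSum π 1) (hφ : Summable fun j => π j * φ j)
    (hφ2 : Summable fun j => π j * φ j ^ 2) :
    φ i - ∑' j, π j * φ j ≤
      √(1 / π i - 1) * √(∑' j, π j * (φ j - ∑' k, π k * φ k) ^ 2) := by
  classical
  set m := ∑' k, π k * φ k
  -- the `π`-density of `δᵢ - π`
  set w : E → ℝ := fun j => (if j = i then 1 / π i else 0) - 1
  have hw2 : HasSum (fun j => π j * w j ^ 2) (1 / π i - 1) := by
    rw [show 1 / π i - 1 = (1 / π i - 2) + 1 by ring]
    refine ((hasSum_ite_eq i (1 / π i - 2)).add hπ).congr_fun fun j => ?_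
    by_cases hj : j = i
    · subst hj; simp only [w, if_true]; field_simp; ring
    · simp only [w, if_neg hj]; ring
  have hcentered : HasSum (fun j => π j * (φ j - m)) 0 := by
    rw [show (0 : ℝ) = m - m * 1 by ring]
    exact (hφ.hasSum.sub (hπ.mul_left m)).congr_fun fun j => by ring
  have hwψ : HasSum (fun j => π j * (w j * (φ j - m))) (φ i - m) := by
    rw [← sub_zero (φ i - m)]
    refine ((hasSum_ite_eq i (φ i - m)).sub hcentered).congr_fun fun j => ?_
    by_cases hj : j = i
    · subst hj; simp only [w, if_true]; field_simp
    · simp only [w, if_neg hj]; ring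
  rw [← hwψ.tsum_eq, ← hw2.tsum_eq]
  exact Real.tsum_weight_mul_le_sqrt_mul_sqrt w _ hπnn hw2.summable
    (hasSum_mul_sub_tsum_sq hπ hφ hφ2).summable

end Variance

section ReversibleKernel

variable {E : Type*} {K : E → E → ℝ} {π : E → ℝ}

theorem kernel_le_div_of_reversible (hK : ∀ i j, 0 ≤ K i j) (hK1 : ∀ i, HasSum (K i) 1)
    (hrev : ∀ i j, π i * K i j = π j * K j i) (hπ : ∀ i, 0 < π i) (j k : E) :
    K j k ≤ π k / π j := by
  rw [le_div_iff₀' (hπ j), hrev]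
  exact mul_le_of_le_one_right (hπ k).le (le_hasSum (hK1 k) j fun l _ => hK k l)

theorem summable_kernel_mul_of_reversible (hK : ∀ i j, 0 ≤ K i j) (hK1 : ∀ i, HasSum (K i) 1)
    (hrev : ∀ i j, π i * K i j = π j * K j i) (hπ : ∀ i, 0 < π i) {a : E → ℝ}
    (ha : Summable fun k => π k * |a k|) (j : E) : Summable fun k => K j k * a k := by
  refine Summable.of_norm_bounded (ha.mul_left (π j)⁻¹) fun k => ?_
  calc ‖K j k * a k‖ = K j k * |a k| := by rw [Real.norm_eq_abs, abs_mul, abs_of_nonneg (hK j k)]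
    _ ≤ π k / π j * |a k| := by
      gcongr; exact kernel_le_div_of_reversible hK hK1 hrev hπ j k
    _ = (π j)⁻¹ * (π k * |a k|) := by ring

theorem hasSum_mul_kernel_apply_of_reversible (hK : ∀ i j, 0 ≤ K i j)
    (hK1 : ∀ i, HasSum (K i) 1) (hrev : ∀ i j, π i * K i j = π j * K j i) (hπ : ∀ i, 0 < π i)
    {h : E → ℝ} (hh : Summable fun k => π k * |h k|) :
    HasSum (fun j => π j * ∑' k, K j k * h k) (∑' k, π k * h k) := by
  set F : E × E → ℝ := fun p => π p.1 * (K p.1 p.2 * h p.2)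
  have hswap : ∀ j k, F (j, k) = π k * h k * K k j := fun j k => by
    simp only [F]; linear_combination h k * hrev j k
  have hG : Summable fun q : E × E => π q.1 * |h q.1| * K q.1 q.2 := by
    rw [summable_prod_of_nonneg fun q => mul_nonneg (mul_nonneg (hπ q.1).le (abs_nonneg _))
      (hK q.1 q.2)]
    refine ⟨fun k => (hK1 k).summable.mul_left (π k * |h k|), ?_⟩
    simpa only [tsum_mul_left, (hK1 _).tsum_eq, mul_one] using hh
  have hF : Summable F := hG.prod_symm.of_norm_bounded fun ⟨j, k⟩ => by
    show ‖F (j, k)‖ ≤ π k * |h k| * K k j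
    rw [hswap, Real.norm_eq_abs, abs_mul, abs_mul, abs_of_nonneg (hπ k).le,
      abs_of_nonneg (hK k j)]
  have hrows : HasSum (fun j => π j * ∑' k, K j k * h k) (∑' p, F p) :=
    hF.hasSum.prod_fiberwise fun j =>
      (summable_kernel_mul_of_reversible hK hK1 hrev hπ hh j).hasSum.mul_left (π j)
  have hcols : HasSum (fun k => π k * h k) (∑' p, F p) := by
    rw [← (Equiv.prodComm E E).tsum_eq F]
    refine hF.prod_symm.hasSum.prod_fiberwise fun k => ?_
    simpa only [Equiv.prodComm_apply, Prod.swap_prod_mk, hswap, mul_one] using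
      (hK1 k).mul_left (π k * h k)
  rwa [hcols.tsum_eq]

theorem kernel_apply_sub_le_sqrt_mul_sqrt_variance (hK : ∀ i j, 0 ≤ K i j)
    (hK1 : ∀ i, HasSum (K i) 1) (hrev : ∀ i j, π i * K i j = π j * K j i) (hπ : ∀ i, 0 < π i)
    (hπ1 : HasSum π 1) {h : E → ℝ} (hh : Summable fun k => π k * h k ^ 2) (i : E) :
    ∑' k, K i k * h k - ∑' k, π k * h k ≤
      √(1 / π i - 1) * √(∑' j, π j * (∑' k, K j k * h k - ∑' k, π k * h k) ^ 2) := by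
  have habs : Summable fun k => π k * |h k| :=
    summable_mul_of_summable_mul_sq (fun j => (hπ j).le) hπ1.summable
      (by simpa only [sq_abs] using hh)
  have habs2 : Summable fun k => π k * |h k ^ 2| := by simpa only [abs_sq] using hh
  have hmean := hasSum_mul_kernel_apply_of_reversible hK hK1 hrev hπ habs
  have hmean2 := hasSum_mul_kernel_apply_of_reversible hK hK1 hrev hπ habs2
  have hjensen : ∀ j, (∑' k, K j k * h k) ^ 2 ≤ ∑' k, K j k * h k ^ 2 := fun j =>
    sq_tsum_le_tsum_mul_sq (hK j) (hK1 j)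
      (summable_kernel_mul_of_reversible hK hK1 hrev hπ habs j)
      (summable_kernel_mul_of_reversible hK hK1 hrev hπ habs2 j)
  have hsq : Summable fun j => π j * (∑' k, K j k * h k) ^ 2 :=
    hmean2.summable.of_nonneg_of_le (fun j => mul_nonneg (hπ j).le (sq_nonneg _)) fun j =>
      mul_le_mul_of_nonneg_left (hjensen j) (hπ j).le
  simpa only [hmean.tsum_eq] using
    sub_tsum_le_sqrt_mul_sqrt_variance (fun j => (hπ j).le) (hπ i) hπ1 hmean.summable hsq

theorem tsum_mul_abs_kernel_sub_le_of_contraction (hK : ∀ i j, 0 ≤ K i j)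
    (hK1 : ∀ i, HasSum (K i) 1) (hrev : ∀ i j, π i * K i j = π j * K j i) (hπ : ∀ i, 0 < π i)
    (hπ1 : HasSum π 1) {f : E → ℝ} (hf2 : Summable fun j => π j * f j ^ 2) {c : ℝ} (hc : 0 ≤ c)
    (hcontr : ∀ g : E → ℝ, (∀ j, g j ^ 2 = 1) →
      √(∑' j, π j * (∑' k, K j k * (f k * g k) - ∑' k, π k * (f k * g k)) ^ 2) ≤
        c * √(∑' j, π j * (f j * g j - ∑' k, π k * (f k * g k)) ^ 2))
    (i : E) :
    ∑' j, f j * |K i j - π j| ≤ √(∑' j, π j * f j ^ 2) * √(1 / π i - 1) * c := by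
  set g : E → ℝ := fun j => if K i j < π j then -1 else 1
  have hg2 : ∀ j, g j ^ 2 = 1 := fun j => by simp only [g]; split_ifs <;> norm_num
  have hh2 : ∀ j, (f j * g j) ^ 2 = f j ^ 2 := fun j => by rw [mul_pow, hg2, mul_one]
  have hπh2 : Summable fun j => π j * (f j * g j) ^ 2 := by simpa only [hh2] using hf2
  have hπh : Summable fun k => π k * (f k * g k) :=
    summable_mul_of_summable_mul_sq (fun j => (hπ j).le) hπ1.summable hπh2
  have habs : Summable fun k => π k * |f k * g k| :=
    summable_mul_of_summable_mul_sq (fun j => (hπ j).le) hπ1.summable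
      (by simpa only [sq_abs] using hπh2)
  set m := ∑' k, π k * (f k * g k)
  have hnorm : ∑' j, f j * |K i j - π j| = ∑' k, K i k * (f k * g k) - m := by
    rw [← (summable_kernel_mul_of_reversible hK hK1 hrev hπ habs i).tsum_sub hπh]
    refine tsum_congr fun j => ?_
    simp only [g]
    split_ifs with hlt
    · rw [abs_of_neg (sub_neg.2 hlt)]; ring
    · rw [abs_of_nonneg (sub_nonneg.2 (not_lt.1 hlt))]; ring
  have hvar : ∑' j, π j * (f j * g j - m) ^ 2 ≤ ∑' j, π j * f j ^ 2 := by
    rw [(hasSum_mul_sub_tsum_sq hπ1 hπh hπh2).tsum_eq, tsum_congr fun j => by rw [hh2]]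
    linarith [sq_nonneg m]
  calc ∑' j, f j * |K i j - π j|
      ≤ √(1 / π i - 1) * √(∑' j, π j * (∑' k, K j k * (f k * g k) - m) ^ 2) :=
        hnorm ▸ kernel_apply_sub_le_sqrt_mul_sqrt_variance hK hK1 hrev hπ hπ1 hπh2 i
    _ ≤ √(1 / π i - 1) * (c * √(∑' j, π j * f j ^ 2)) := by
        gcongr
        exact (hcontr g hg2).trans (by gcongr)
    _ = _ := by ring

end ReversibleKernel

theorem f_ergodicity_from_L2_convergence_general {E : Type*}
    (P : ℝ → E → E → ℝ) (π : E → ℝ)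
    (hπpos : ∀ i, 0 < π i) (hπ : HasSum π 1)
    (hPnn : ∀ t i j, 0 ≤ t → 0 ≤ P t i j) (hP : ∀ t i, 0 ≤ t → HasSum (P t i) 1)
    (hrev : ∀ t i j, 0 ≤ t → π i * P t i j = π j * P t j i)
    (f : E → ℝ) (hf : ∀ i, 1 ≤ f i) (hf2 : Summable fun i => π i * f i ^ 2)
    (σ : ℝ)
    (hexp : ∀ g : E → ℝ, (Summable fun i => f i ^ 2 * π i * g i ^ 2) →
      ∀ t, 0 ≤ t →
        Real.sqrt (∑' i, (f i ^ 2 * π i) *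
            ((1 / f i) * (∑' j, P t i j * (f j * g j))
              - (1 / f i) * (∑' j, π j * (f j * g j))) ^ 2)
          ≤ Real.exp (-σ * t) * Real.sqrt (∑' i, (f i ^ 2 * π i) *
              (g i - (1 / f i) * (∑' j, π j * (f j * g j))) ^ 2)) :
    ∀ i, ∀ t, 0 ≤ t →
      (∑' j, f j * |P t i j - π j|)
        ≤ Real.sqrt (∑' j, π j * f j ^ 2) * Real.sqrt (1 / π i - 1) * Real.exp (-σ * t) := by
  intro i t ht
  have hfne : ∀ j, f j ≠ 0 := fun j => (one_pos.trans_le (hf j)).ne'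
  have hweight : ∀ j y b, (f j ^ 2 * π j) * (y - (f j)⁻¹ * b) ^ 2 = π j * (f j * y - b) ^ 2 :=
    fun j y b => by field_simp [hfne j]
  refine tsum_mul_abs_kernel_sub_le_of_contraction (fun j k => hPnn t j k ht)
    (fun j => hP t j ht) (fun j k => hrev t j k ht) hπpos hπ hf2 (Real.exp_pos _).le
    (fun g hg2 => ?_) i
  have hcontract := hexp g (hf2.congr fun j => by rw [hg2]; ring) t ht
  simpa only [one_div, hweight, mul_inv_cancel_left₀, hfne, ne_eq, not_false_eq_true]
    using hcontract

/-- If the h-transformed semigroup converges exponentially in L²(ν)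
at rate σ > 0, then P_t is exponentially f-ergodic with constant
π(f²)^{1/2}·(1/πᵢ − 1)^{1/2}: ‖P_t(i,·) − π‖_f ≤ π(f²)^{1/2}(1/πᵢ − 1)^{1/2} e^{−σt}. -/
theorem f_ergodicity_from_L2_convergence {E : Type*} [Countable E]
    (P : ℝ → E → E → ℝ) (π : E → ℝ)
    (hπpos : ∀ i, 0 < π i) (hπ : HasSum π 1)
    (hPnn : ∀ t i j, 0 ≤ t → 0 ≤ P t i j) (hP : ∀ t i, 0 ≤ t → HasSum (P t i) 1)
    (hrev : ∀ t i j, 0 ≤ t → π i * P t i j = π j * P t j i)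
    (hsemi : ∀ s t, 0 ≤ s → 0 ≤ t → ∀ i j, P (t + s) i j = ∑' k, P t i k * P s k j)
    (f : E → ℝ) (hf : ∀ i, 1 ≤ f i) (hf2 : Summable fun i => π i * f i ^ 2)
    (σ : ℝ) (hσ : 0 < σ)
    (hexp : ∀ g : E → ℝ, (Summable fun i => f i ^ 2 * π i * g i ^ 2) →
      ∀ t, 0 ≤ t →
        Real.sqrt (∑' i, (f i ^ 2 * π i) *
            ((1 / f i) * (∑' j, P t i j * (f j * g j))
              - (1 / f i) * (∑' j, π j * (f j * g j))) ^ 2)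
          ≤ Real.exp (-σ * t) * Real.sqrt (∑' i, (f i ^ 2 * π i) *
              (g i - (1 / f i) * (∑' j, π j * (f j * g j))) ^ 2)) :
    ∀ i, ∀ t, 0 ≤ t →
      (∑' j, f j * |P t i j - π j|)
        ≤ Real.sqrt (∑' j, π j * f j ^ 2) * Real.sqrt (1 / π i - 1) * Real.exp (-σ * t) :=
  f_ergodicity_from_L2_convergence_general P π hπpos hπ hPnn hP hrev f hf hf2 σ hexp
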